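/- arXiv:1603.03003 — 6 statements merged into one kernel-verified Lean document; each statement's English description precedes it below -/
import Mathlib

section
/- Let X be a path-connected, locally path-connected, semilocally simply connected topological space with base point x, and let X_x → X be its universal cover. Then the group of deck transformations Aut(X_x / X) is isomorphic to π₁(X, x). -/
/-- `X` is semilocally simply connected. -/
def SemilocallySimplyConnected (X : Type*) [TopologicalSpace X] : Prop :=
  ∀ x : X, ∃ U ∈ nhds x, ∀ γ : Path x x, (∀ t, γ t ∈ U) → Path.Homotopic γ (Path.refl x)

/-- The group of deck transformations of a covering `π : Y → X`: homeomorphisms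
`f : Y → Y` with `π ∘ f = π`, as a subgroup of the permutation group of `Y`. -/
def deckGroup {Y X : Type*} [TopologicalSpace Y] [TopologicalSpace X] (π : Y → X) :
    Subgroup (Equiv.Perm Y) where
  carrier := {f | Continuous f ∧ Continuous f.symm ∧ π ∘ f = π}
  one_mem' := ⟨continuous_id, continuous_id, rfl⟩
  mul_mem' := by
    rintro f g ⟨hf, hf', hfp⟩ ⟨hg, hg', hgp⟩
    exact ⟨hf.comp hg, hg'.comp hf', by
      show π ∘ (f ∘ g) = π
      rw [← Function.comp_assoc, hfp, hgp]⟩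
  inv_mem' := by
    rintro f ⟨hf, hf', hfp⟩
    refine ⟨hf', hf, ?_⟩
    funext y
    have : π (f⁻¹ y) = (π ∘ f) (f⁻¹ y) := congrFun hfp.symm _
    simpa using this

/-!
The deck group acts on the universal cover continuously and freely: a deck transformation is a
lift of `π` through `π`, so by uniqueness of lifts over the connected space `X_x` it is determined
by its value at one point. It acts transitively on each fibre: `X_x` is simply connected and
locally path-connected, so `π` lifts through itself sending any point of a fibre to any other, and
two such lifts in opposite directions are inverse to each other. Hence `π` is the quotient covering
map of the deck group, and monodromy identifies `π₁(X, x)` with the opposite of the deck group;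
inversion turns that into the deck group itself.
-/

open Function Set

-- The local homeomorphisms serve as charts modelled on `X`.
theorem IsLocalHomeomorph.locallyPathConnectedSpace {E X : Type*} [TopologicalSpace E]
    [TopologicalSpace X] [LocallyPathConnectedSpace X] {p : E → X} (hp : IsLocalHomeomorph p) :
    LocallyPathConnectedSpace E :=
  letI : ChartedSpace X E :=
    { atlas := range fun e ↦ (hp e).choose
      chartAt e := (hp e).choose
      mem_chart_source e := (hp e).choose_spec.1
      chart_mem_atlas e := mem_range_self e }
  ChartedSpace.locallyPathConnectedSpace X E

namespace IsCoveringMap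

variable {E X : Type*} [TopologicalSpace E] [TopologicalSpace X] {p : E → X}
  (cov : IsCoveringMap p)
include cov

theorem surjective [PathConnectedSpace X] [Nonempty E] : Surjective p := by
  intro x
  obtain ⟨e⟩ := ‹Nonempty E›
  let γ := PathConnectedSpace.somePath (p e) x
  obtain ⟨Γ, hΓ, -⟩ := cov.exists_path_lifts γ e γ.source
  exact ⟨Γ 1, congrFun hΓ 1 |>.trans γ.target⟩

theorem exists_continuousMap_comp_eq_self_apply_eq [SimplyConnectedSpace E]
    [LocallyPathConnectedSpace E] {e₁ e₂ : E} (h : p e₁ = p e₂) :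
    ∃ F : C(E, E), p ∘ F = p ∧ F e₁ = e₂ :=
  let ⟨F, ⟨hF, hpF⟩, _⟩ := cov.existsUnique_continuousMap_lifts ⟨p, cov.continuous⟩ e₁ e₂ h.symm
  ⟨F, hpF, hF⟩

theorem exists_mem_deckGroup_apply_eq [SimplyConnectedSpace E] [LocallyPathConnectedSpace E]
    {e₁ e₂ : E} (h : p e₁ = p e₂) : ∃ d ∈ deckGroup p, d e₁ = e₂ := by
  obtain ⟨F, hpF, hF⟩ := cov.exists_continuousMap_comp_eq_self_apply_eq h
  obtain ⟨G, hpG, hG⟩ := cov.exists_continuousMap_comp_eq_self_apply_eq h.symm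
  have hGF : G ∘ F = id := cov.eq_of_comp_eq (G.continuous.comp F.continuous) continuous_id
    (by rw [← comp_assoc, hpG, hpF]; rfl) e₁ (by simp [hF, hG])
  have hFG : F ∘ G = id := cov.eq_of_comp_eq (F.continuous.comp G.continuous) continuous_id
    (by rw [← comp_assoc, hpF, hpG]; rfl) e₂ (by simp [hF, hG])
  exact ⟨⟨F, G, congrFun hGF, congrFun hFG⟩, ⟨F.continuous, G.continuous, hpF⟩, hF⟩

theorem eq_of_mem_deckGroup_of_apply_eq [PreconnectedSpace E] {d d' : Equiv.Perm E}
    (hd : d ∈ deckGroup p) (hd' : d' ∈ deckGroup p) {e : E} (h : d e = d' e) : d = d' :=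
  Equiv.coe_fn_injective <| cov.eq_of_comp_eq hd.1 hd'.1 (hd.2.2.trans hd'.2.2.symm) e h

theorem isQuotientCoveringMap_deckGroup [PathConnectedSpace X] [LocallyPathConnectedSpace X]
    [SimplyConnectedSpace E] : IsQuotientCoveringMap p (deckGroup p) := by
  have := cov.isLocalHomeomorph.locallyPathConnectedSpace
  have hcont : ContinuousConstSMul (deckGroup p) E := ⟨fun d ↦ d.2.1⟩
  have hcancel : IsCancelSMul (deckGroup p) E :=
    { left_cancel' d _ _ := smul_left_cancel d
      right_cancel' d d' _ h := Subtype.ext (cov.eq_of_mem_deckGroup_of_apply_eq d.2 d'.2 h) }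
  refine (isQuotientCoveringMap_iff_isCoveringMap_and p (deckGroup p)).mpr
    ⟨cov, cov.surjective, hcont, hcancel, fun {e₁ e₂} ↦ ⟨fun h ↦ ?_, ?_⟩⟩
  · obtain ⟨d, hd, hde⟩ := cov.exists_mem_deckGroup_apply_eq h.symm
    exact ⟨⟨d, hd⟩, hde⟩
  · rintro ⟨d, rfl⟩
    exact congrFun d.2.2.2 e₂

end IsCoveringMap

theorem deckGroup_iso_fundamentalGroup_general {X Xx : Type*} [TopologicalSpace X]
    [TopologicalSpace Xx] [PathConnectedSpace X] [LocallyPathConnectedSpace X] (x : X)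
    (π : Xx → X) (hπ : IsCoveringMap π) [SimplyConnectedSpace Xx] :
    Nonempty (deckGroup π ≃* FundamentalGroup X x) := by
  have hquot := hπ.isQuotientCoveringMap_deckGroup
  obtain ⟨e, he⟩ := hquot.surjective x
  exact ⟨(MulEquiv.inv' _).trans (hquot.fundamentalGroupEquiv ⟨e, he⟩).symm⟩

/-- For a universal cover `π : X_x → X` of a path-connected, locally path-connected,
semilocally simply connected space `X`, the group of deck transformations `Aut(X_x/X)` is
isomorphic to the fundamental group `π₁(X, x)`. -/
theorem deckGroup_iso_fundamentalGroup {X Xx : Type*} [TopologicalSpace X]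
    [TopologicalSpace Xx] [PathConnectedSpace X] [LocallyPathConnectedSpace X]
    (hX : SemilocallySimplyConnected X) (x : X)
    (π : Xx → X) (hπ : IsCoveringMap π) [SimplyConnectedSpace Xx] :
    Nonempty (deckGroup π ≃* FundamentalGroup X x) :=
  deckGroup_iso_fundamentalGroup_general x π hπ
end

section
/- Let k be a finite field with algebraic closure k̄. Then the absolute Galois group Gal(k̄/k) is topologically generated by the Frobenius automorphism x ↦ x^q, where q = |k|; that is, the closure of the subgroup generated by the Frobenius (in the Krull topology) is all of Gal(k̄/k). Moreover Gal(k̄/k) is isomorphic as a profinite group to Ẑ = lim← ℤ/nℤ. -/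
/-!
Let `F` be the Frobenius `x ↦ x ^ q` of `K`. For `n ≥ 1` the fixed field `Kₙ` of `F ^ n` is the
root set of `X ^ q ^ n - X`, hence has `q ^ n` elements and degree `n` over `k`, and every
subextension of degree `n` lies in `Kₙ`. So `Gal(Kₙ/k)` is cyclic of order `n`, generated by the
Frobenius, and restricting to `Kₙ` and taking the discrete logarithm gives compatible continuous
homomorphisms `Gal(K/k) → ℤ/nℤ`, i.e. a continuous homomorphism `Gal(K/k) → Ẑ`. It is injective
because `K` is the union of the `Kₙ`, and surjective by compactness of `Gal(K/k)`, since
`F ^ a` hits any prescribed residue `a` mod `n`; a continuous bijection from a compact group onto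
the Hausdorff group `Ẑ` is a homeomorphism. Density of `⟨F⟩`: by infinite Galois theory its closure
is the fixing group of its fixed field, and that fixed field is `K₁ = k`.
-/

/-- `Ẑ = lim← ℤ/nℤ`: compatible families in `Π n, ℤ/nℤ`, indexed by positive naturals
ordered by divisibility. -/
def ZHat : AddSubgroup (Π n : ℕ+, ZMod n) where
  carrier := {f | ∀ (m n : ℕ+) (h : (m : ℕ) ∣ (n : ℕ)), ZMod.castHom h (ZMod m) (f n) = f m}
  zero_mem' := fun m n h => by simp
  add_mem' := by
    intro f g hf hg m n h
    simp only [Pi.add_apply, map_add, hf m n h, hg m n h]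
  neg_mem' := by
    intro f hf m n h
    simp only [Pi.neg_apply, map_neg, hf m n h]

noncomputable instance (n : ℕ) : TopologicalSpace (ZMod n) := ⊥

open Polynomial IntermediateField

instance (n : ℕ) : DiscreteTopology (ZMod n) := ⟨rfl⟩

theorem ZHat.surjective_of_continuous {X : Type*} [TopologicalSpace X] [CompactSpace X]
    {f : X → ZHat} (hf : Continuous f)
    (hsurj : ∀ (n : ℕ+) (a : ZMod n), ∃ x, (f x : Π n : ℕ+, ZMod n) n = a) :
    Function.Surjective f := by
  intro F
  let C (n : ℕ+) : Set X := {x | (f x : Π n : ℕ+, ZMod n) n = (F : Π n : ℕ+, ZMod n) n}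
  have hC (m n : ℕ+) : C (m * n) ⊆ C m := by
    intro x (hx : _ = _)
    have hmn : (m : ℕ) ∣ (m * n : ℕ+) := by simp
    change _ = _
    rw [← (f x).2 m _ hmn, ← F.2 m _ hmn, hx]
  have hclosed (n : ℕ+) : IsClosed (C n) :=
    (isClosed_discrete {(F : Π n : ℕ+, ZMod n) n}).preimage
      ((continuous_apply n).comp (continuous_subtype_val.comp hf))
  obtain ⟨x, hx⟩ := IsCompact.nonempty_iInter_of_directed_nonempty_isCompact_isClosed C
    (fun m n ↦ ⟨m * n, hC m n, mul_comm m n ▸ hC n m⟩) (fun n ↦ hsurj n _)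
    (fun n ↦ (hclosed n).isCompact) hclosed
  exact ⟨x, Subtype.ext (funext (Set.mem_iInter.1 hx))⟩

namespace FiniteField

variable (k K : Type*) [Field k] [Fintype k] [Field K] [Algebra k K]

section Algebraic

variable [Algebra.IsAlgebraic k K]

noncomputable def frobeniusFixedField (n : ℕ) : IntermediateField k K :=
  fixedField (Subgroup.zpowers (frobeniusAlgEquivOfAlgebraic k K ^ n))

variable {k K}

theorem frobeniusAlgEquivOfAlgebraic_pow_apply (n : ℕ) (x : K) :
    (frobeniusAlgEquivOfAlgebraic k K ^ n) x = x ^ Fintype.card k ^ n := by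
  rw [AlgEquiv.coe_pow, coe_frobeniusAlgEquivOfAlgebraic_iterate]

theorem mem_frobeniusFixedField {n : ℕ} {x : K} :
    x ∈ frobeniusFixedField k K n ↔ x ^ Fintype.card k ^ n = x := by
  rw [frobeniusFixedField, mem_fixedField_iff, ← frobeniusAlgEquivOfAlgebraic_pow_apply]
  exact ⟨fun h ↦ h _ (Subgroup.mem_zpowers _), fun h f hf ↦
    (Subgroup.zpowers_le (H := MulAction.stabilizer _ x)).2 h hf⟩

theorem frobeniusFixedField_mono {m n : ℕ} (h : m ∣ n) :
    frobeniusFixedField k K m ≤ frobeniusFixedField k K n := by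
  obtain ⟨c, rfl⟩ := h
  refine fixedField_antitone (Subgroup.zpowers_le.2 ?_)
  rw [pow_mul]
  exact Subgroup.pow_mem _ (Subgroup.mem_zpowers _) c

theorem le_frobeniusFixedField_finrank (E : IntermediateField k K) [FiniteDimensional k E] :
    E ≤ frobeniusFixedField k K (Module.finrank k E) := by
  have : Finite E := Module.finite_of_finite k
  have : Fintype E := Fintype.ofFinite E
  intro x hx
  rw [mem_frobeniusFixedField, ← Module.card_eq_pow_finrank]
  exact congr_arg Subtype.val (FiniteField.pow_card (⟨x, hx⟩ : E))

theorem exists_mem_frobeniusFixedField (x : K) : ∃ n : ℕ+, x ∈ frobeniusFixedField k K n := by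
  have hx : IsIntegral k x := Algebra.IsIntegral.isIntegral x
  have := adjoin.finiteDimensional hx
  refine ⟨⟨Module.finrank k k⟮x⟯, Module.finrank_pos⟩, ?_⟩
  exact le_frobeniusFixedField_finrank _ (mem_adjoin_simple_self k x)

theorem coe_frobeniusFixedField (n : ℕ) [NeZero n] :
    (frobeniusFixedField k K n : Set K) = (X ^ Fintype.card k ^ n - X : k[X]).rootSet K := by
  ext x
  have hne : (X ^ Fintype.card k ^ n - X : k[X]) ≠ 0 :=
    X_pow_card_pow_sub_X_ne_zero k (NeZero.ne n) Fintype.one_lt_card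
  simp [mem_rootSet, hne, mem_frobeniusFixedField, sub_eq_zero]

instance (n : ℕ) [NeZero n] : Finite (frobeniusFixedField k K n) :=
  Set.Finite.to_subtype (coe_frobeniusFixedField (k := k) (K := K) n ▸ rootSet_finite _ K)

end Algebraic

section AlgClosure

variable [IsAlgClosure k K] {k K}

theorem natCard_frobeniusFixedField (n : ℕ) [NeZero n] :
    Nat.card (frobeniusFixedField k K n) = Fintype.card k ^ n := by
  classical
  have := IsAlgClosure.isAlgClosed k (K := K)
  obtain ⟨p, _⟩ := CharP.exists k
  obtain ⟨m, hp, hq⟩ := FiniteField.card k p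
  have hsep : (X ^ Fintype.card k ^ n - X : k[X]).Separable :=
    galois_poly_separable p _ (hq ▸ dvd_pow (dvd_pow_self p m.ne_zero) (NeZero.ne n))
  rw [← SetLike.coe_sort_coe, coe_frobeniusFixedField, Nat.card_eq_fintype_card,
    card_rootSet_eq_natDegree hsep (IsAlgClosed.splits _),
    X_pow_card_pow_sub_X_natDegree_eq k (NeZero.ne n) Fintype.one_lt_card]

theorem finrank_frobeniusFixedField (n : ℕ) [NeZero n] :
    Module.finrank k (frobeniusFixedField k K n) = n := by
  apply Nat.pow_right_injective (Fintype.one_lt_card : 1 < Fintype.card k)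
  dsimp only
  rw [← Nat.card_eq_fintype_card, ← Module.natCard_eq_pow_finrank, natCard_frobeniusFixedField,
    Nat.card_eq_fintype_card]

theorem frobeniusFixedField_one : frobeniusFixedField k K 1 = ⊥ :=
  IntermediateField.finrank_eq_one_iff.1 (finrank_frobeniusFixedField 1)


theorem restrictNormalHom_frobeniusAlgEquivOfAlgebraic (L : IntermediateField k K) [Normal k L] :
    AlgEquiv.restrictNormalHom L (frobeniusAlgEquivOfAlgebraic k K) =
      frobeniusAlgEquivOfAlgebraic k L := by
  ext x
  simp [AlgEquiv.restrictNormalHom_apply]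

theorem mem_zpowers_frobeniusAlgEquivOfAlgebraic (L : Type*) [Field L] [Algebra k L] [Finite L]
    (σ : Gal(L/k)) : σ ∈ Subgroup.zpowers (frobeniusAlgEquivOfAlgebraic k L) := by
  obtain ⟨j, rfl⟩ := (bijective_frobeniusAlgEquivOfAlgebraic_pow k L).2 σ
  exact Subgroup.npow_mem_zpowers _ _

theorem natCard_algEquiv_frobeniusFixedField (n : ℕ) [NeZero n] :
    Nat.card Gal(frobeniusFixedField k K n / k) = n := by
  rw [IsGalois.card_aut_eq_finrank, finrank_frobeniusFixedField]

variable (k K) in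
noncomputable def frobeniusLog (n : ℕ) [NeZero n] : Gal(K/k) →* Multiplicative (ZMod n) :=
  (zmodMulEquivOfGenerator (mem_zpowers_frobeniusAlgEquivOfAlgebraic (k := k) _)
    (natCard_algEquiv_frobeniusFixedField (K := K) n)).symm.toMonoidHom.comp
    (AlgEquiv.restrictNormalHom (frobeniusFixedField k K n))

section FixedDegree

variable {n : ℕ} [NeZero n]

theorem frobeniusLog_frobeniusAlgEquivOfAlgebraic_pow (j : ℕ) :
    frobeniusLog k K n (frobeniusAlgEquivOfAlgebraic k K ^ j) = .ofAdd (j : ZMod n) := by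
  simp only [frobeniusLog, MonoidHom.coe_comp, Function.comp_apply, map_pow,
    restrictNormalHom_frobeniusAlgEquivOfAlgebraic, MulEquiv.coe_toMonoidHom,
    zmodMulEquivOfGenerator_symm_apply_generator, ← ofAdd_nsmul, nsmul_one]

theorem frobeniusLog_eq_iff {σ τ : Gal(K/k)} :
    frobeniusLog k K n σ = frobeniusLog k K n τ ↔ ∀ x ∈ frobeniusFixedField k K n, σ x = τ x := by
  simp only [frobeniusLog, MonoidHom.coe_comp, Function.comp_apply, MulEquiv.coe_toMonoidHom,
    EmbeddingLike.apply_eq_iff_eq, AlgEquiv.ext_iff, Subtype.ext_iff,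
    AlgEquiv.restrictNormalHom_apply, Subtype.forall]

theorem apply_eq_frobeniusAlgEquivOfAlgebraic_pow (σ : Gal(K/k)) {x : K}
    (hx : x ∈ frobeniusFixedField k K n) :
    σ x = (frobeniusAlgEquivOfAlgebraic k K ^ (frobeniusLog k K n σ).toAdd.val) x := by
  refine frobeniusLog_eq_iff.1 ?_ x hx
  rw [frobeniusLog_frobeniusAlgEquivOfAlgebraic_pow, ZMod.natCast_zmod_val, ofAdd_toAdd]

theorem castHom_frobeniusLog {m : ℕ} [NeZero m] (h : m ∣ n) (σ : Gal(K/k)) :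
    ZMod.castHom h (ZMod m) (frobeniusLog k K n σ).toAdd = (frobeniusLog k K m σ).toAdd := by
  set a := (frobeniusLog k K n σ).toAdd
  have hagree :
      frobeniusLog k K m σ = frobeniusLog k K m (frobeniusAlgEquivOfAlgebraic k K ^ a.val) :=
    frobeniusLog_eq_iff.2 fun x hx ↦
      apply_eq_frobeniusAlgEquivOfAlgebraic_pow σ (frobeniusFixedField_mono h hx)
  rw [hagree, frobeniusLog_frobeniusAlgEquivOfAlgebraic_pow, toAdd_ofAdd, ZMod.castHom_apply,
    ZMod.cast_eq_val]

theorem continuous_frobeniusLog : Continuous (frobeniusLog k K n) := by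
  rw [frobeniusLog, MonoidHom.coe_comp]
  exact continuous_of_discreteTopology.comp (InfiniteGalois.restrictNormalHom_continuous _)

end FixedDegree

variable (k K) in
noncomputable def galToZHat : Gal(K/k) →* Multiplicative ZHat where
  toFun σ := .ofAdd ⟨fun n ↦ (frobeniusLog k K n σ).toAdd, fun _ _ h ↦ castHom_frobeniusLog h σ⟩
  map_one' := by
    rw [← ofAdd_zero]
    congr 1
    ext n
    simp
  map_mul' σ τ := by
    rw [← ofAdd_add]
    congr 1
    ext n
    simp

@[simp]
theorem galToZHat_apply (σ : Gal(K/k)) (n : ℕ+) :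
    ((galToZHat k K σ).toAdd : Π n : ℕ+, ZMod n) n = (frobeniusLog k K n σ).toAdd :=
  rfl

theorem injective_galToZHat : Function.Injective (galToZHat k K) := by
  intro σ τ h
  ext x
  obtain ⟨n, hx⟩ := exists_mem_frobeniusFixedField (k := k) x
  have hn := congr_arg (fun g : Multiplicative ZHat ↦ (g.toAdd : Π n : ℕ+, ZMod n) n) h
  simp only [galToZHat_apply, EmbeddingLike.apply_eq_iff_eq] at hn
  exact frobeniusLog_eq_iff.1 hn x hx

theorem continuous_galToZHat : Continuous (galToZHat k K) :=
  continuous_ofAdd.comp <| Continuous.subtype_mk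
    (continuous_pi fun _ ↦ continuous_toAdd.comp continuous_frobeniusLog) _

theorem surjective_galToZHat : Function.Surjective (galToZHat k K) := by
  have := ZHat.surjective_of_continuous (continuous_toAdd.comp continuous_galToZHat)
    fun n a ↦ ⟨frobeniusAlgEquivOfAlgebraic k K ^ a.val, by
      rw [Function.comp_apply, galToZHat_apply, frobeniusLog_frobeniusAlgEquivOfAlgebraic_pow,
        toAdd_ofAdd, ZMod.natCast_zmod_val]⟩
  exact fun g ↦ (this g.toAdd).imp fun _ ↦ congrArg Multiplicative.ofAdd

variable (k K) in
noncomputable def galEquivZHat : Gal(K/k) ≃ₜ* Multiplicative ZHat :=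
  let e := MulEquiv.ofBijective (galToZHat k K) ⟨injective_galToZHat, surjective_galToZHat⟩
  { e with
    continuous_toFun := continuous_galToZHat
    continuous_invFun :=
      (continuous_galToZHat.homeoOfEquivCompactToT2 (f := e.toEquiv)).symm.continuous }

theorem topologicalClosure_zpowers_frobeniusAlgEquivOfAlgebraic :
    (Subgroup.zpowers (frobeniusAlgEquivOfAlgebraic k K)).topologicalClosure = ⊤ := by
  set H := Subgroup.zpowers (frobeniusAlgEquivOfAlgebraic k K)
  have hfix : fixedField H = ⊥ := by
    simpa [frobeniusFixedField] using frobeniusFixedField_one (k := k) (K := K)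
  rw [eq_top_iff, ← fixingSubgroup_bot, ← hfix]
  calc fixingSubgroup (fixedField H) ≤ fixingSubgroup (fixedField H.topologicalClosure) :=
        fixingSubgroup_antitone (fixedField_antitone H.le_topologicalClosure)
    _ = H.topologicalClosure :=
        InfiniteGalois.fixingSubgroup_fixedField ⟨_, H.isClosed_topologicalClosure⟩

end AlgClosure
end FiniteField

open FiniteField

/-- The absolute Galois group of a finite field `k` is topologically generated by the
Frobenius `x ↦ x^q`, `q = |k|`, and is isomorphic as a topological (profinite) group
to `Ẑ = lim← ℤ/nℤ`. -/
theorem galoisGroup_finiteField (k K : Type*) [Field k] [Fintype k] [Field K]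
    [Algebra k K] [IsAlgClosure k K] (φ : K ≃ₐ[k] K)
    (hφ : ∀ x : K, φ x = x ^ Fintype.card k) :
    closure ((Subgroup.zpowers φ : Subgroup (K ≃ₐ[k] K)) : Set (K ≃ₐ[k] K)) = Set.univ ∧
    ∃ e : (K ≃ₐ[k] K) ≃* Multiplicative ZHat, Continuous e ∧ Continuous e.symm := by
  obtain rfl : φ = frobeniusAlgEquivOfAlgebraic k K := AlgEquiv.ext hφ
  refine ⟨?_, (galEquivZHat k K).toMulEquiv, (galEquivZHat k K).continuous,
    (galEquivZHat k K).symm.continuous⟩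
  rw [← Subgroup.topologicalClosure_coe, topologicalClosure_zpowers_frobeniusAlgEquivOfAlgebraic,
    Subgroup.coe_top]
end

section
/- Let K ⊆ L be a Galois field extension and H a closed subgroup of Gal(L/K) (with the Krull topology). Then Gal(L/L^H) = H, where L^H is the fixed field of H. Consequently, the map H ↦ L^H is an inclusion-reversing bijection between closed subgroups of Gal(L/K) and intermediate fields K ⊆ M ⊆ L. -/
open IntermediateField

/-- Infinite Galois correspondence: for a Galois extension `L/K` and a closed subgroup `H` of
`Gal(L/K)` (Krull topology), `Gal(L/L^H) = H`; consequently `H ↦ L^H` is an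
inclusion-reversing bijection between closed subgroups and intermediate fields. -/
theorem krull_galois_correspondence (K L : Type*) [Field K] [Field L] [Algebra K L]
    [IsGalois K L] :
    (∀ H : Subgroup (L ≃ₐ[K] L), IsClosed (H : Set (L ≃ₐ[K] L)) →
      (fixedField H).fixingSubgroup = H) ∧
    ∃ e : {H : Subgroup (L ≃ₐ[K] L) // IsClosed (H : Set (L ≃ₐ[K] L))} ≃
        IntermediateField K L,
      (∀ H, e H = fixedField H.1) ∧
      ∀ H₁ H₂, H₁.1 ≤ H₂.1 → e H₂ ≤ e H₁ := by
  have fixingSubgroup_fixedField (H : Subgroup (L ≃ₐ[K] L))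
      (hH : IsClosed (H : Set (L ≃ₐ[K] L))) : (fixedField H).fixingSubgroup = H :=
    InfiniteGalois.fixingSubgroup_fixedField ⟨H, hH⟩
  refine ⟨fixingSubgroup_fixedField, ?_⟩
  refine ⟨{ toFun := fun H => fixedField H.1
            invFun := fun M => ⟨M.fixingSubgroup, InfiniteGalois.fixingSubgroup_isClosed M⟩
            left_inv := fun H => Subtype.ext (fixingSubgroup_fixedField H.1 H.2)
            right_inv := fun M => InfiniteGalois.fixedField_fixingSubgroup M },
    fun _ => rfl, fun _ _ => fixedField_le⟩
end

section
/- Let k be an algebraically closed field and A a commutative k-algebra that is an integral domain. Let K be a field extension of k. Then k is integrally closed in A implies K is integrally closed in K ⊗_k A; in particular, if k is algebraically closed in A, then K = K ⊗_k k is the algebraic closure of K in K ⊗_k A. -/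
/-!
Write `x ∈ K ⊗[k] A` as `∑ cᵢ ⊗ bᵢ` for a `k`-basis `(bᵢ)` of `A` with `b₀ = 1`; the claim is
that `cᵢ = 0` for `i ≠ 0`. The `cᵢ`, together with the coefficients of an integral equation of
`x`, lie in a finitely generated `k`-subalgebra `R` of `K`, over which `x` is still integral.
Every `k`-point `ψ : R → k` specializes `x` to `∑ ψ(cᵢ) bᵢ ∈ A`, which is integral over `k`, hence
lies in `k`, so `ψ(cᵢ) = 0` for `i ≠ 0`. Since `k` is algebraically closed and `R` is a reduced
finitely generated `k`-algebra, the Nullstellensatz says that `k`-points separate the elements of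
`R`, so `cᵢ = 0`.
-/

open Polynomial TensorProduct

namespace Module.Basis

variable {k A ι : Type*} [CommRing k] [CommRing A] [Algebra k A] {b : Basis ι k A}

theorem baseChange_repr_map {R S : Type*} [CommRing R] [Algebra k R] [CommRing S] [Algebra k S]
    (f : R →ₐ[k] S) (y : R ⊗[k] A) (i : ι) :
    (b.baseChange S).repr (Algebra.TensorProduct.map f (AlgHom.id k A) y) i =
      f ((b.baseChange R).repr y i) := by
  induction y using TensorProduct.induction_on with
  | zero => simp
  | tmul r a => simp
  | add y z hy hz => simp [hy, hz]

variable {i₀ : ι} (hb : b i₀ = 1)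
include hb

theorem baseChange_repr_algebraMap (S : Type*) [CommRing S] [Algebra k S] (s : S) :
    (b.baseChange S).repr (algebraMap S (S ⊗[k] A) s) = Finsupp.single i₀ s := by
  rw [Algebra.TensorProduct.algebraMap_apply, Algebra.algebraMap_self, RingHom.id_apply, ← hb,
    ← mul_one s, ← smul_eq_mul, ← TensorProduct.smul_tmul', ← baseChange_apply, map_smul,
    repr_self, Finsupp.smul_single_one, smul_eq_mul, mul_one]

theorem eq_algebraMap_of_baseChange_repr_eq_zero {S : Type*} [CommRing S] [Algebra k S]
    {z : S ⊗[k] A} (hz : ∀ i ≠ i₀, (b.baseChange S).repr z i = 0) :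
    z = algebraMap S (S ⊗[k] A) ((b.baseChange S).repr z i₀) := by
  apply (b.baseChange S).repr.injective
  ext i
  rw [baseChange_repr_algebraMap hb]
  obtain rfl | hi := eq_or_ne i i₀
  · simp
  · rw [hz i hi, Finsupp.single_eq_of_ne hi]

theorem algHom_baseChange_repr_eq_zero
    (hA : ∀ a : A, IsIntegral k a → a ∈ (algebraMap k A).range) {R : Type*} [CommRing R]
    [Algebra k R] {y : R ⊗[k] A} (hy : IsIntegral R y) (ψ : R →ₐ[k] k) {i : ι} (hi : i ≠ i₀) :
    ψ ((b.baseChange R).repr y i) = 0 := by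
  let Ψ : R ⊗[k] A →ₐ[k] A :=
    (Algebra.TensorProduct.lid k A).toAlgHom.comp (Algebra.TensorProduct.map ψ (AlgHom.id k A))
  have hΨ : (algebraMap k A).comp ψ.toRingHom = Ψ.toRingHom.comp (algebraMap R (R ⊗[k] A)) := by
    ext r
    change algebraMap k A (ψ r) = Ψ (r ⊗ₜ 1)
    simp [Ψ, Algebra.algebraMap_eq_smul_one]
  obtain ⟨μ, hμ⟩ := hA _ (hy.map_of_comp_eq ψ.toRingHom Ψ.toRingHom hΨ)
  have hψy : Algebra.TensorProduct.map ψ (AlgHom.id k A) y = algebraMap k (k ⊗[k] A) μ :=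
    (Algebra.TensorProduct.lid k A).injective
      (by simpa [Ψ, Algebra.algebraMap_eq_smul_one] using hμ.symm)
  rw [← baseChange_repr_map, hψy, baseChange_repr_algebraMap hb, Finsupp.single_eq_of_ne hi]

end Module.Basis

section Nullstellensatz

variable {k R : Type*} [Field k] [IsAlgClosed k] [CommRing R] [Algebra k R]
  [Algebra.FiniteType k R]

theorem Ideal.IsMaximal.exists_algHom_ker_eq {m : Ideal R} (hm : m.IsMaximal) :
    ∃ ψ : R →ₐ[k] k, RingHom.ker ψ = m := by
  let := Ideal.Quotient.field m
  have : Module.Finite k (R ⧸ m) := finite_of_finite_type_of_isJacobsonRing k (R ⧸ m)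
  let e : k ≃ₐ[k] R ⧸ m := AlgEquiv.ofBijective (Algebra.ofId k _)
    IsAlgClosed.algebraMap_bijective_of_isIntegral
  refine ⟨e.symm.toAlgHom.comp (Ideal.Quotient.mkₐ k m), ?_⟩
  ext r
  simp [RingHom.mem_ker, Ideal.Quotient.eq_zero_iff_mem]

theorem eq_zero_of_forall_algHom_apply_eq_zero [IsReduced R] {r : R}
    (h : ∀ ψ : R →ₐ[k] k, ψ r = 0) : r = 0 := by
  have : IsJacobsonRing R := isJacobsonRing_of_finiteType (A := k)
  have hr : r ∈ (⊥ : Ideal R).jacobson := Ideal.mem_sInf.2 fun m ⟨_, hm⟩ => by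
    obtain ⟨ψ, rfl⟩ := hm.exists_algHom_ker_eq (k := k)
    exact h ψ
  rwa [← Ideal.radical_eq_jacobson, Ideal.radical_bot_of_isReduced, Ideal.mem_bot] at hr

end Nullstellensatz

theorem mem_range_algebraMap_of_isIntegral_of_finiteType {k A R : Type*} [Field k]
    [IsAlgClosed k] [CommRing A] [Algebra k A] [CommRing R] [Algebra k R]
    [Algebra.FiniteType k R] [IsReduced R]
    (hA : ∀ a : A, IsIntegral k a → a ∈ (algebraMap k A).range) {y : R ⊗[k] A}
    (hy : IsIntegral R y) : y ∈ (algebraMap R (R ⊗[k] A)).range := by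
  cases subsingleton_or_nontrivial A
  · exact ⟨0, Subsingleton.elim _ _⟩
  have h1 : LinearIndepOn k id ({1} : Set A) := .singleton one_ne_zero
  let b := Module.Basis.extend h1
  have hb : b ⟨1, h1.subset_extend _ rfl⟩ = 1 := Module.Basis.extend_apply_self _ _
  refine ⟨_, (Module.Basis.eq_algebraMap_of_baseChange_repr_eq_zero hb fun i hi => ?_).symm⟩
  exact eq_zero_of_forall_algHom_apply_eq_zero fun ψ =>
    Module.Basis.algHom_baseChange_repr_eq_zero hb hA hy ψ hi

theorem IsIntegral.of_monic_mem_lifts {R S B : Type*} [CommRing R] [CommRing S] [Ring B]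
    [Algebra R S] [Algebra S B] [Algebra R B] [IsScalarTower R S B] {x : B} {p : S[X]}
    (hp : p.Monic) (hlifts : p ∈ lifts (algebraMap R S)) (hx : aeval x p = 0) :
    IsIntegral R x := by
  obtain ⟨q, rfl, -, hq⟩ := lifts_and_natDegree_eq_and_monic hlifts hp
  exact ⟨q, hq, by rwa [aeval_map_algebraMap, aeval_def] at hx⟩

namespace Subalgebra

variable {k K A : Type*} [CommRing k] [CommRing K] [Algebra k K] [CommRing A] [Algebra k A]

theorem range_rTensor_val_mono {R R' : Subalgebra k K} (h : R ≤ R') :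
    LinearMap.range (R.val.toLinearMap.rTensor A) ≤
      LinearMap.range (R'.val.toLinearMap.rTensor A) := by
  rw [show R.val.toLinearMap = R'.val.toLinearMap ∘ₗ (inclusion h).toLinearMap from rfl,
    LinearMap.rTensor_comp]
  exact LinearMap.range_comp_le_range _ _

theorem exists_fg_mem_range_rTensor_val (x : K ⊗[k] A) :
    ∃ R : Subalgebra k K, R.FG ∧ x ∈ LinearMap.range (R.val.toLinearMap.rTensor A) := by
  induction x using TensorProduct.induction_on with
  | zero => exact ⟨⊥, fg_bot, zero_mem _⟩
  | tmul c a =>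
    exact ⟨Algebra.adjoin k (({c} : Finset K) : Set K), fg_adjoin_finset _,
      ⟨c, Algebra.subset_adjoin (Finset.mem_coe.2 (Finset.mem_singleton_self c))⟩ ⊗ₜ a, rfl⟩
  | add x y hx hy =>
    obtain ⟨R, hR, hxR⟩ := hx
    obtain ⟨R', hR', hyR'⟩ := hy
    exact ⟨R ⊔ R', hR.sup hR', add_mem (range_rTensor_val_mono le_sup_left hxR)
      (range_rTensor_val_mono le_sup_right hyR')⟩

theorem exists_fg_isIntegral_of_isIntegral [Module.Flat k A] {x : K ⊗[k] A}
    (hx : IsIntegral K x) :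
    ∃ R : Subalgebra k K, R.FG ∧ ∃ y : R ⊗[k] A, IsIntegral R y ∧
      Algebra.TensorProduct.map (Algebra.ofId R K) (AlgHom.id k A) y = x := by
  obtain ⟨p, hpm, hpx⟩ := hx
  obtain ⟨R₀, hR₀, hxR₀⟩ := exists_fg_mem_range_rTensor_val (A := A) x
  let R := R₀ ⊔ Algebra.adjoin k (p.coeffs : Set K)
  obtain ⟨y, rfl⟩ := range_rTensor_val_mono (le_sup_left : R₀ ≤ R) hxR₀
  let Φ : R ⊗[k] A →ₐ[R] K ⊗[k] A := Algebra.TensorProduct.map (Algebra.ofId R K) (AlgHom.id k A)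
  have hΦ : Function.Injective Φ :=
    Module.Flat.rTensor_preserves_injective_linearMap R.val.toLinearMap Subtype.val_injective
  have hlifts : p ∈ lifts (algebraMap R K) := by
    rw [lifts_iff_coeffs_subset_range]
    exact fun c hc => ⟨⟨c, le_sup_right (a := R₀) (Algebra.subset_adjoin hc)⟩, rfl⟩
  refine ⟨R, hR₀.sup (fg_adjoin_finset _), y, ?_, rfl⟩
  exact (isIntegral_algHom_iff Φ hΦ).1 (.of_monic_mem_lifts hpm hlifts hpx)

end Subalgebra

open scoped TensorProduct in
theorem baseChange_integrallyClosed_general (k A K : Type*) [Field k] [IsAlgClosed k]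
    [CommRing A] [Algebra k A] [Field K] [Algebra k K]
    (h : ∀ a : A, IsIntegral k a → a ∈ (algebraMap k A).range) :
    ∀ x : K ⊗[k] A, IsIntegral K x → x ∈ (algebraMap K (K ⊗[k] A)).range := by
  intro x hx
  obtain ⟨R, hR, y, hy, rfl⟩ := Subalgebra.exists_fg_isIntegral_of_isIntegral hx
  have : Algebra.FiniteType k R := R.fg_iff_finiteType.1 hR
  obtain ⟨r, rfl⟩ := mem_range_algebraMap_of_isIntegral_of_finiteType h hy
  exact ⟨r, by simp⟩

open scoped TensorProduct in
/-- Let `k` be an algebraically closed field, `A` a `k`-algebra which is a domain, and `K` a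
field extension of `k`. If `k` is integrally (= algebraically) closed in `A`, then `K` is
integrally closed in `K ⊗_k A`. -/
theorem baseChange_integrallyClosed (k A K : Type*) [Field k] [IsAlgClosed k]
    [CommRing A] [IsDomain A] [Algebra k A] [Field K] [Algebra k K]
    (h : ∀ a : A, IsIntegral k a → a ∈ (algebraMap k A).range) :
    ∀ x : K ⊗[k] A, IsIntegral K x → x ∈ (algebraMap K (K ⊗[k] A)).range :=
  baseChange_integrallyClosed_general k A K h
end

section
/- Let k be an algebraically closed field and A a finitely generated k-algebra such that Spec A is connected (equivalently, A has no nontrivial idempotents). Let K be a field extension of k. Then Spec(K ⊗_k A) is connected (equivalently, K ⊗_k A has no nontrivial idempotents). -/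
open scoped TensorProduct

/-!
For a `k`-point `φ` of `A`, the induced `K`-point of `K ⊗[k] A` sends the idempotent `e` to
`0` or `1` in the field `K`. Pushing `e` forward along a `k`-linear retraction `π : K → k` of
`algebraMap k K` gives `a ∈ A` with `φ a` equal to that value for every `φ`. Since `k` is
algebraically closed, the Nullstellensatz makes everything killed by all `k`-points nilpotent,
so `e ≡ 1 ⊗ a` and `a ^ 2 ≡ a` modulo nilpotents. Lifting idempotents along the nilradical
of `A` forces `a ≡ 0` or `a ≡ 1`, and an idempotent congruent to `0` or `1` modulo a nilpotent
equals it.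
-/

theorem IsAlgClosed.isNilpotent_of_forall_algHom_eq_zero {k A : Type*} [Field k] [IsAlgClosed k]
    [CommRing A] [Algebra k A] [Algebra.FiniteType k A] {x : A}
    (hx : ∀ φ : A →ₐ[k] k, φ x = 0) : IsNilpotent x := by
  have : IsJacobsonRing A := isJacobsonRing_of_finiteType (A := k)
  rw [← mem_nilradical, nilradical, Ideal.radical_eq_jacobson, Ideal.jacobson, Ideal.mem_sInf]
  rintro m ⟨-, hm⟩
  let _ : Field (A ⧸ m) := Ideal.Quotient.field m
  let residue : A ⧸ m →ₐ[k] k :=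
    have : Module.Finite k (A ⧸ m) := finite_of_finite_type_of_isJacobsonRing k (A ⧸ m)
    IsAlgClosed.lift
  rw [← Ideal.Quotient.eq_zero_iff_mem, ← map_eq_zero_iff residue residue.toRingHom.injective]
  exact hx (residue.comp (Ideal.Quotient.mkₐ k m))

namespace AlgHom

variable {k A : Type*} [CommSemiring k] [CommSemiring A] [Algebra k A] (K : Type*) [CommSemiring K]
  [Algebra k K]

noncomputable def baseChangePoint (φ : A →ₐ[k] k) : K ⊗[k] A →ₐ[K] K :=
  liftEquiv k K A K ((Algebra.ofId k K).comp φ)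

theorem baseChangePoint_tmul (φ : A →ₐ[k] k) (s : K) (a : A) :
    φ.baseChangePoint K (s ⊗ₜ a) = φ a • s := by
  simp [baseChangePoint, Algebra.smul_def, mul_comm]

theorem apply_lid_rTensor (φ : A →ₐ[k] k) (π : K →ₗ[k] k) (x : K ⊗[k] A) :
    φ (TensorProduct.lid k A (π.rTensor A x)) = π (φ.baseChangePoint K x) := by
  induction x using TensorProduct.induction_on with
  | zero => simp
  | tmul s a => simp [baseChangePoint_tmul, mul_comm]
  | add x y hx hy => simp only [map_add, hx, hy]

end AlgHom

open AlgHom in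
theorem isNilpotent_of_forall_baseChangePoint_eq_zero {k A K : Type*} [Field k] [IsAlgClosed k]
    [CommRing A] [Algebra k A] [Algebra.FiniteType k A] [CommRing K] [Algebra k K]
    {x : K ⊗[k] A} (hx : ∀ φ : A →ₐ[k] k, φ.baseChangePoint K x = 0) : IsNilpotent x := by
  let b := Module.Free.chooseBasis k K
  obtain ⟨c, rfl⟩ := TensorProduct.eq_repr_basis_left b x
  have hc : ∀ i, IsNilpotent (c i) := by
    refine fun i ↦ IsAlgClosed.isNilpotent_of_forall_algHom_eq_zero (k := k) fun φ ↦ ?_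
    have := linearIndependent_iff.mp b.linearIndependent (c.mapRange φ φ.map_zero) ?_
    · simpa using DFunLike.congr_fun this i
    · rw [Finsupp.linearCombination_apply, Finsupp.sum_mapRange_index (by simp)]
      simpa [Finsupp.sum, baseChangePoint_tmul] using hx φ
  refine isNilpotent_sum fun i _ ↦ ?_
  obtain ⟨n, hn⟩ := hc i
  exact ⟨n, by rw [Algebra.TensorProduct.tmul_pow, hn, TensorProduct.tmul_zero]⟩

theorem isNilpotent_or_isNilpotent_sub_one_of_isNilpotent_mul_self_sub {A : Type*} [CommRing A]
    (h : ∀ e : A, IsIdempotentElem e → e = 0 ∨ e = 1) {a : A} (ha : IsNilpotent (a * a - a)) :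
    IsNilpotent a ∨ IsNilpotent (a - 1) := by
  let q := Ideal.Quotient.mk (nilradical A)
  have hq : ∀ x, q x = 0 ↔ IsNilpotent x := fun x ↦ Ideal.Quotient.eq_zero_iff_mem
  obtain ⟨e, he, hea⟩ := exists_isIdempotentElem_eq_of_ker_isNilpotent q
    (fun x hx ↦ (hq x).mp hx) (q a) ⟨a, rfl⟩
    (by rw [IsIdempotentElem, ← map_mul, ← sub_eq_zero, ← map_sub, hq]; exact ha)
  rcases h e he with rfl | rfl
  · exact .inl ((hq a).mp (by simpa using hea.symm))
  · exact .inr ((hq _).mp (by simp [map_sub, ← hea]))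

theorem IsIdempotentElem.eq_zero_or_one_of_isNilpotent_sub_map {R S : Type*} [CommRing R]
    [CommRing S] (hR : ∀ e : R, IsIdempotentElem e → e = 0 ∨ e = 1) (f : R →+* S) {e : S}
    (he : IsIdempotentElem e) {a : R} (ha : IsNilpotent (a * a - a))
    (hea : IsNilpotent (e - f a)) : e = 0 ∨ e = 1 := by
  rcases isNilpotent_or_isNilpotent_sub_one_of_isNilpotent_mul_self_sub hR ha with h0 | h1
  · refine .inl (he.eq_zero_of_isNilpotent ?_)
    simpa using (Commute.all _ _).isNilpotent_add hea (h0.map f)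
  · refine .inr (sub_eq_zero.mp (he.one_sub.eq_zero_of_isNilpotent ?_)).symm
    have hsum : e - f a + f (a - 1) = -(1 - e) := by
      rw [map_sub, map_one]; ring
    rw [← isNilpotent_neg_iff, ← hsum]
    exact (Commute.all _ _).isNilpotent_add hea (h1.map f)

open AlgHom in
/-- Let `k` be an algebraically closed field, `A` a finitely generated `k`-algebra with no
nontrivial idempotents (i.e. `Spec A` connected), and `K` a field extension of `k`. Then
`K ⊗_k A` has no nontrivial idempotents (i.e. `Spec (K ⊗_k A)` is connected). -/
theorem baseChange_connected (k A K : Type*) [Field k] [IsAlgClosed k]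
    [CommRing A] [Algebra k A] [Algebra.FiniteType k A] [Field K] [Algebra k K]
    (h : ∀ e : A, IsIdempotentElem e → e = 0 ∨ e = 1) :
    ∀ e : K ⊗[k] A, IsIdempotentElem e → e = 0 ∨ e = 1 := by
  intro e he
  obtain ⟨π, hπ⟩ := (Algebra.linearMap k K).exists_leftInverse_of_injective
    (LinearMap.ker_eq_bot.mpr (algebraMap k K).injective)
  have hπ1 : π 1 = 1 := by simpa using LinearMap.congr_fun hπ 1
  set a := TensorProduct.lid k A (π.rTensor A e)
  have hpoint : ∀ φ : A →ₐ[k] k,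
      φ a = 0 ∧ φ.baseChangePoint K e = 0 ∨ φ a = 1 ∧ φ.baseChangePoint K e = 1 := by
    intro φ
    rw [apply_lid_rTensor]
    rcases IsIdempotentElem.iff_eq_zero_or_one.mp (he.map (φ.baseChangePoint K)) with h0 | h1
    · simp [h0]
    · simp [h1, hπ1]
  have hea : IsNilpotent (e - Algebra.TensorProduct.includeRight a) :=
    isNilpotent_of_forall_baseChangePoint_eq_zero fun φ ↦ by
      rcases hpoint φ with ⟨hφa, hφe⟩ | ⟨hφa, hφe⟩ <;> simp [baseChangePoint_tmul, hφa, hφe]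
  have ha : IsNilpotent (a * a - a) :=
    IsAlgClosed.isNilpotent_of_forall_algHom_eq_zero (k := k) fun φ ↦ by
      rcases hpoint φ with ⟨hφa, -⟩ | ⟨hφa, -⟩ <;> simp [hφa]
  exact he.eq_zero_or_one_of_isNilpotent_sub_map h Algebra.TensorProduct.includeRight.toRingHom
    ha hea
end

section
/- Let k be a field of characteristic p > 0 and consider the polynomial ring k[s, t]. For the element a = s·t ∈ k(s, t), the Artin–Schreier extension of k(s,t) given by x^p − x = st is a degree-p extension that is not obtained by base change from an extension of k(s); more precisely, x^p − x − st is irreducible over k(s, t), and there is no y ∈ k(s,t) with y^p − y − st ∈ k(s). -/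
/-!
If a monic factor `g` of `X ^ p - X - C a` has degree `d`, each root `ρ` of `g` in an
algebraic closure satisfies `ρ ^ p = ρ + a`; since Frobenius is additive, the sum `σ` of the
roots, which lies in the base field, satisfies `σ ^ p = σ + d * a`. For `0 < d < p` the element
`σ / d` is then a solution of `c ^ p - c = a`. So irreducibility of `X ^ p - X - C (s * t)`
reduces to the second claim (with `y = c` the difference is `0 ∈ k(s)`).

For the second claim embed `k(s, t)` into `k(s)(t)`. There `y ^ p - y` has `t`-degree `≤ 0` or
exactly `p * deg y ≥ p`, whereas `s * t + w` with `w ∈ k(s)` has `t`-degree `1`.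
-/

open Polynomial

namespace Polynomial

variable {K : Type*} [Field K]

theorem exists_pow_eq_add_nsmul_of_monic_dvd (p : ℕ) [ExpChar K p] {a : K} {g : K[X]}
    (hg : g.Monic) (hdvd : g ∣ X ^ p - X - C a) : ∃ b : K, b ^ p = b + g.natDegree • a := by
  let E := AlgebraicClosure K
  have : ExpChar E p := expChar_of_injective_algebraMap (algebraMap K E).injective p
  set gE := g.map (algebraMap K E)
  have hsplit : gE.Splits := IsAlgClosed.splits gE
  have hroot : ∀ r ∈ gE.roots, r ^ p = r + algebraMap K E a := by
    intro r hr
    have hfr := eval_eq_zero_of_dvd_of_eval_eq_zero (Polynomial.map_dvd _ hdvd)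
      ((mem_roots (hg.map _).ne_zero).mp hr)
    simp only [Polynomial.map_sub, Polynomial.map_pow, map_X, map_C, eval_sub, eval_pow, eval_X,
      eval_C] at hfr
    linear_combination hfr
  refine ⟨-g.nextCoeff, (algebraMap K E).injective ?_⟩
  have hsum : algebraMap K E (-g.nextCoeff) = gE.roots.sum := by
    rw [map_neg, ← nextCoeff_map (algebraMap K E).injective,
      hsplit.nextCoeff_eq_neg_sum_roots_of_monic (hg.map _), neg_neg]
  rw [map_pow, map_add, map_nsmul, hsum, multiset_sum_pow_char, Multiset.map_congr rfl hroot,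
    Multiset.sum_map_add, Multiset.map_id', Multiset.map_const', Multiset.sum_replicate,
    splits_iff_card_roots.mp hsplit, natDegree_map]

theorem X_pow_sub_X_sub_C_monic {p : ℕ} (hp : 1 < p) (a : K) : (X ^ p - X - C a).Monic := by
  rw [sub_sub]
  refine monic_X_pow_sub ?_
  rw [degree_X_add_C]
  exact_mod_cast hp

theorem natDegree_X_pow_sub_X_sub_C {p : ℕ} (hp : 1 < p) (a : K) :
    (X ^ p - X - C a).natDegree = p := by
  rw [sub_sub, natDegree_sub_eq_left_of_natDegree_lt] <;> simp [hp]

theorem X_pow_sub_X_sub_C_irreducible_of_prime {p : ℕ} (hp : p.Prime) [CharP K p] {a : K}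
    (ha : ∀ c : K, c ^ p - c ≠ a) : Irreducible (X ^ p - X - C a) := by
  have : Fact p.Prime := ⟨hp⟩
  have hmonic := X_pow_sub_X_sub_C_monic hp.one_lt a
  have hne : X ^ p - X - C a ≠ 1 := fun h =>
    hp.ne_zero (by simpa [h] using natDegree_X_pow_sub_X_sub_C hp.one_lt a : 0 = p).symm
  rw [hmonic.irreducible_iff_lt_natDegree_lt hne, natDegree_X_pow_sub_X_sub_C hp.one_lt]
  intro g hg hdeg hdvd
  obtain ⟨b, hb⟩ := exists_pow_eq_add_nsmul_of_monic_dvd p hg hdvd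
  set d := g.natDegree
  have hd : (d : K) ≠ 0 := by
    rw [Ne, CharP.cast_eq_zero_iff K p]
    simp only [Finset.mem_Ioc] at hdeg
    exact Nat.not_dvd_of_pos_of_lt hdeg.1 (hdeg.2.trans_lt (Nat.div_lt_self hp.pos one_lt_two))
  have hdp : (d : K) ^ p = d := by rw [← frobenius_def, map_natCast]
  refine ha (b / d) ?_
  rw [div_pow, hdp, hb, nsmul_eq_mul]
  field_simp
  ring

end Polynomial

namespace RatFunc

variable {F : Type*} [Field F]

theorem intDegree_pow {x : RatFunc F} (hx : x ≠ 0) (n : ℕ) :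
    (x ^ n).intDegree = n * x.intDegree := by
  induction n with
  | zero => simp
  | succ n ih =>
    rw [pow_succ, intDegree_mul (pow_ne_zero _ hx) hx, ih]
    push_cast
    ring

theorem intDegree_pow_sub_self_ne_one {p : ℕ} (hp : 2 ≤ p) (y : RatFunc F) :
    (y ^ p - y).intDegree ≠ 1 := by
  intro h
  have hsub : y ^ p - y ≠ 0 := fun h0 => by simp [h0] at h
  have hy : y ≠ 0 := by rintro rfl; simp [zero_pow (by omega : p ≠ 0)] at hsub
  have hpow := intDegree_pow hy p
  have hp' : (2 : ℤ) ≤ p := by exact_mod_cast hp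
  rcases le_or_gt y.intDegree 0 with hle | hpos
  · have hmax :=
      intDegree_add_le (x := y ^ p) (neg_ne_zero.mpr hy) (by rwa [← sub_eq_add_neg])
    rw [← sub_eq_add_neg, h, hpow, intDegree_neg] at hmax
    have hpd : (p : ℤ) * y.intDegree ≤ 0 := by nlinarith
    have := hmax.trans (max_le hpd hle)
    omega
  · have hmax := intDegree_add_le (x := y ^ p - y) hy (by simpa using pow_ne_zero p hy)
    rw [sub_add_cancel, h, hpow, max_eq_right (by omega)] at hmax
    nlinarith

theorem intDegree_C_mul_X_add_C {a : F} (ha : a ≠ 0) (b : F) :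
    (C a * X + C b : RatFunc F).intDegree = 1 := by
  rw [← algebraMap_C, ← algebraMap_X, ← algebraMap_C, ← map_mul, ← map_add,
    intDegree_polynomial, natDegree_linear ha, Nat.cast_one]

theorem pow_sub_self_ne_C_mul_X_add_C {p : ℕ} (hp : 2 ≤ p) (y : RatFunc F) {a : F}
    (ha : a ≠ 0) (b : F) : y ^ p - y ≠ C a * X + C b := fun h =>
  intDegree_pow_sub_self_ne_one hp y (h ▸ intDegree_C_mul_X_add_C ha b)

end RatFunc

namespace MvPolynomial

variable (k : Type*) [Field k]

noncomputable def finTwoEquivPolynomialPolynomial : MvPolynomial (Fin 2) k ≃ₐ[k] k[X][X] :=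
  (renameEquiv k (Equiv.swap 0 1)).trans
    ((finSuccEquiv k 1).trans (Polynomial.mapAlgEquiv (uniqueAlgEquiv k (Fin 1))))

theorem finSuccEquiv_one_X_one : finSuccEquiv k 1 (X 1) = Polynomial.C (X 0) :=
  finSuccEquiv_X_succ (j := 0)

@[simp]
theorem finTwoEquivPolynomialPolynomial_X_zero :
    finTwoEquivPolynomialPolynomial k (X 0) = Polynomial.C Polynomial.X := by
  simp [finTwoEquivPolynomialPolynomial, finSuccEquiv_one_X_one]

@[simp]
theorem finTwoEquivPolynomialPolynomial_X_one :
    finTwoEquivPolynomialPolynomial k (X 1) = Polynomial.X := by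
  simp [finTwoEquivPolynomialPolynomial, finSuccEquiv_X_zero]

@[simp]
theorem finTwoEquivPolynomialPolynomial_C (c : k) :
    finTwoEquivPolynomialPolynomial k (C c) = Polynomial.C (Polynomial.C c) := by
  rw [← algebraMap_eq, AlgEquiv.commutes]
  rfl

noncomputable def toRatFuncRatFunc : MvPolynomial (Fin 2) k →+* RatFunc (RatFunc k) :=
  (algebraMap (RatFunc k)[X] (RatFunc (RatFunc k))).comp <|
    (Polynomial.mapRingHom (algebraMap k[X] (RatFunc k))).comp
      (finTwoEquivPolynomialPolynomial k).toRingEquiv.toRingHom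

theorem toRatFuncRatFunc_injective : Function.Injective (toRatFuncRatFunc k) :=
  (IsFractionRing.injective (RatFunc k)[X] _).comp <|
    (Polynomial.map_injective _ (IsFractionRing.injective k[X] _)).comp (AlgEquiv.injective _)

@[simp]
theorem toRatFuncRatFunc_X_zero :
    toRatFuncRatFunc k (X 0) = RatFunc.C (RatFunc.X : RatFunc k) := by
  simp [toRatFuncRatFunc, RatFunc.algebraMap_X, RatFunc.algebraMap_C]

@[simp]
theorem toRatFuncRatFunc_X_one : toRatFuncRatFunc k (X 1) = RatFunc.X := by
  simp [toRatFuncRatFunc, RatFunc.algebraMap_X]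

@[simp]
theorem toRatFuncRatFunc_C (c : k) : toRatFuncRatFunc k (C c) = RatFunc.C (RatFunc.C c) := by
  simp [toRatFuncRatFunc, RatFunc.algebraMap_C]

noncomputable def fractionRingToRatFuncRatFunc :
    FractionRing (MvPolynomial (Fin 2) k) →+* RatFunc (RatFunc k) :=
  IsFractionRing.lift (toRatFuncRatFunc_injective k)

@[simp]
theorem fractionRingToRatFuncRatFunc_algebraMap (x : MvPolynomial (Fin 2) k) :
    fractionRingToRatFuncRatFunc k (algebraMap _ _ x) = toRatFuncRatFunc k x :=
  IsFractionRing.lift_algebraMap _ x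

theorem fractionRingToRatFuncRatFunc_mem_fieldRange_C {z : FractionRing (MvPolynomial (Fin 2) k)}
    (hz : z ∈ IntermediateField.adjoin k {algebraMap (MvPolynomial (Fin 2) k) _ (X 0)}) :
    fractionRingToRatFuncRatFunc k z ∈ (RatFunc.C : RatFunc k →+* _).fieldRange := by
  let T : IntermediateField k (FractionRing (MvPolynomial (Fin 2) k)) :=
    Subfield.toIntermediateField
      ((RatFunc.C : RatFunc k →+* _).fieldRange.comap (fractionRingToRatFuncRatFunc k))
      fun c => ⟨RatFunc.C c, by
        simp [IsScalarTower.algebraMap_apply k (MvPolynomial (Fin 2) k)]⟩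
  have hsT : algebraMap (MvPolynomial (Fin 2) k) _ (X 0) ∈ T := ⟨RatFunc.X, by simp⟩
  exact IntermediateField.adjoin_le_iff.mpr (Set.singleton_subset_iff.mpr hsT) hz

theorem pow_sub_self_sub_X_zero_mul_X_one_notMem_adjoin {p : ℕ} (hp : 2 ≤ p)
    (y : FractionRing (MvPolynomial (Fin 2) k)) :
    letI s := algebraMap (MvPolynomial (Fin 2) k) (FractionRing (MvPolynomial (Fin 2) k)) (X 0)
    letI t := algebraMap (MvPolynomial (Fin 2) k) (FractionRing (MvPolynomial (Fin 2) k)) (X 1)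
    y ^ p - y - s * t ∉ IntermediateField.adjoin k {s} := by
  intro hy
  obtain ⟨w, hw⟩ := fractionRingToRatFuncRatFunc_mem_fieldRange_C k hy
  simp only [map_sub, map_pow, map_mul, fractionRingToRatFuncRatFunc_algebraMap,
    toRatFuncRatFunc_X_zero, toRatFuncRatFunc_X_one] at hw
  exact RatFunc.pow_sub_self_ne_C_mul_X_add_C hp (fractionRingToRatFuncRatFunc k y)
    RatFunc.X_ne_zero w (by linear_combination -hw)

end MvPolynomial

/-- Lang–Serre example: over `k(s,t)` with `char k = p > 0`, the Artin–Schreier polynomial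
`x^p - x - st` is irreducible, and there is no `y ∈ k(s,t)` with `y^p - y - st ∈ k(s)`;
so the Artin–Schreier cover `x^p - x = st` is a degree-`p` extension not obtained by base
change from `k(s)`. -/
theorem langSerre_example (k : Type*) [Field k] (p : ℕ) [CharP k p] (hp : 0 < p) :
    letI K := FractionRing (MvPolynomial (Fin 2) k)
    letI s : K := algebraMap (MvPolynomial (Fin 2) k) K (MvPolynomial.X 0)
    letI t : K := algebraMap (MvPolynomial (Fin 2) k) K (MvPolynomial.X 1)
    Irreducible (X ^ p - X - C (s * t) : K[X]) ∧
      ∀ y : K, y ^ p - y - s * t ∉ IntermediateField.adjoin k {s} := by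
  have hprime : p.Prime := (CharP.char_is_prime_or_zero k p).resolve_right hp.ne'
  have : CharP (FractionRing (MvPolynomial (Fin 2) k)) p :=
    charP_of_injective_algebraMap (algebraMap k _).injective p
  have hnotMem := MvPolynomial.pow_sub_self_sub_X_zero_mul_X_one_notMem_adjoin k hprime.two_le
  refine ⟨X_pow_sub_X_sub_C_irreducible_of_prime hprime fun c hc => hnotMem c ?_, hnotMem⟩
  rw [hc, sub_self]
  exact zero_mem _
end
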